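/- arXiv:1909.07496 — 2 statements merged into one kernel-verified Lean document; each statement's English description precedes it below -/
import Mathlib

section
/- Let f₀, β : EuclideanSpace ℝ (Fin 2) → ℝ be differentiable, let k > 0, and let φ(q) = f₀(q)/(f₀(q)^k + β(q))^(1/k) be the Rimon–Koditschek potential. Let p : ℝ → EuclideanSpace ℝ (Fin 2) be differentiable at t₀ and suppose p'(t₀) = −c·(I + γ·J)(∇φ(p(t₀))) for real constants c and γ. If β(p(t₀)) = 0 and f₀(p(t₀)) > 0, then the composite function β ∘ p is differentiable at t₀ with derivative (β ∘ p)'(t₀) = (c/k) · f₀(p(t₀))^(−k) · ‖∇β(p(t₀))‖². -/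
/-- The skew-symmetric rotation `J = [[0,1],[-1,0]]` on the plane: `J(v₁,v₂) = (v₂,-v₁)`. -/
noncomputable def Jmap (v : EuclideanSpace ℝ (Fin 2)) : EuclideanSpace ℝ (Fin 2) :=
  !₂[v 1, -v 0]

/-!
On the obstacle boundary `β = 0` the denominator `(f₀^k + β)^(1/k)` equals `f₀`, and to first
order it is `f₀ + f₀^(1-k) β / k`; the quotient rule then cancels the `f₀`-contributions, so
`∇φ = -(f₀^(-k) / k) ∇β` there. The velocity `-c (I + γ J) ∇φ` is therefore a multiple of
`∇β + γ J ∇β`, and since `J` is a rotation by a right angle, `⟪∇β, J ∇β⟫ = 0`.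
-/

open scoped RealInnerProductSpace

theorem HasFDerivAt.div {𝕜 E : Type*} [NontriviallyNormedField 𝕜] [NormedAddCommGroup E]
    [NormedSpace 𝕜 E] {u v : E → 𝕜} {u' v' : StrongDual 𝕜 E} {x : E}
    (hu : HasFDerivAt u u' x) (hv : HasFDerivAt v v' x) (hx : v x ≠ 0) :
    HasFDerivAt (fun y => u y / v y) ((v x)⁻¹ • u' - (u x / v x ^ 2) • v') x := by
  have hinv : HasFDerivAt (fun y => (v y)⁻¹) (-(v x ^ 2)⁻¹ • v') x :=
    (hasDerivAt_inv hx).comp_hasFDerivAt x hv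
  simp only [div_eq_mul_inv]
  refine (hu.fun_mul hinv).congr_fderiv ?_
  ext y
  simp only [add_apply, sub_apply, smul_apply, smul_eq_mul]
  ring

section RimonKoditschek

variable {E : Type*} [NormedAddCommGroup E] [NormedSpace ℝ E]
  {f₀ β : E → ℝ} {f₀' β' : StrongDual ℝ E} {x : E} {k : ℝ}

noncomputable def rimonKoditschek (f₀ β : E → ℝ) (k : ℝ) (q : E) : ℝ :=
  f₀ q / (f₀ q ^ k + β q) ^ (1 / k)

theorem hasFDerivAt_rimonKoditschek_denominator (hf : HasFDerivAt f₀ f₀' x)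
    (hb : HasFDerivAt β β' x) (hk : k ≠ 0) (hβ0 : β x = 0) (hpos : 0 < f₀ x) :
    HasFDerivAt (fun q => (f₀ q ^ k + β q) ^ (1 / k)) (f₀' + (f₀ x ^ (1 - k) / k) • β') x := by
  set a := f₀ x
  have hgx : f₀ x ^ k + β x = a ^ k := by rw [hβ0, add_zero]
  have hexp : (a ^ k) ^ (1 / k - 1) = a ^ (1 - k) := by
    rw [← Real.rpow_mul hpos.le]
    congr 1
    field_simp
  have hcancel : a ^ (1 - k) * a ^ (k - 1) = 1 := by
    rw [← Real.rpow_add hpos, show 1 - k + (k - 1) = 0 by ring, Real.rpow_zero]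
  have hg : HasFDerivAt (fun q => f₀ q ^ k + β q) ((k * a ^ (k - 1)) • f₀' + β') x :=
    (hf.rpow_const (Or.inl hpos.ne')).add hb
  refine (hg.rpow_const (p := 1 / k) (Or.inl ?_)).congr_fderiv ?_
  · rw [hgx]
    exact (Real.rpow_pos_of_pos hpos k).ne'
  · rw [hgx, hexp]
    match_scalars
    · field_simp
      linear_combination hcancel
    · ring

theorem hasFDerivAt_rimonKoditschek_of_eq_zero (hf : HasFDerivAt f₀ f₀' x)
    (hb : HasFDerivAt β β' x) (hk : k ≠ 0) (hβ0 : β x = 0) (hpos : 0 < f₀ x) :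
    HasFDerivAt (rimonKoditschek f₀ β k) (-(f₀ x ^ (-k) / k) • β') x := by
  set a := f₀ x
  have hden : (f₀ x ^ k + β x) ^ (1 / k) = a := by
    rw [hβ0, add_zero, ← Real.rpow_mul hpos.le, mul_one_div_cancel hk, Real.rpow_one]
  have hsplit : a ^ (1 - k) = a * a ^ (-k) := by
    rw [sub_eq_add_neg, Real.rpow_add hpos, Real.rpow_one]
  have h := hf.div (hasFDerivAt_rimonKoditschek_denominator hf hb hk hβ0 hpos)
    (by rw [hden]; exact hpos.ne')
  refine h.congr_fderiv ?_
  rw [hden, hsplit]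
  match_scalars <;> field_simp <;> ring

end RimonKoditschek

theorem gradient_rimonKoditschek_of_eq_zero {E : Type*} [NormedAddCommGroup E]
    [InnerProductSpace ℝ E] [CompleteSpace E] {f₀ β : E → ℝ} {x : E} {k : ℝ}
    (hf : DifferentiableAt ℝ f₀ x) (hb : DifferentiableAt ℝ β x) (hk : k ≠ 0)
    (hβ0 : β x = 0) (hpos : 0 < f₀ x) :
    gradient (rimonKoditschek f₀ β k) x = -(f₀ x ^ (-k) / k) • gradient β x := by
  rw [(hasFDerivAt_rimonKoditschek_of_eq_zero hf.hasFDerivAt hb.hasFDerivAt hk hβ0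
    hpos).hasGradientAt.gradient, map_smul]
  rfl

theorem Jmap_smul (r : ℝ) (v : EuclideanSpace ℝ (Fin 2)) : Jmap (r • v) = r • Jmap v := by
  ext i
  fin_cases i <;> simp [Jmap]

theorem inner_Jmap_self (v : EuclideanSpace ℝ (Fin 2)) : ⟪v, Jmap v⟫ = 0 := by
  simp only [Jmap, PiLp.inner_apply, RCLike.inner_apply, Real.ringHom_apply, Fin.sum_univ_two,
    Matrix.cons_val_zero, Matrix.cons_val_one, Matrix.cons_val_fin_one]
  ring

/-- Along a trajectory of the averaged extremum-seeking dynamics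
`p' = -c (I + γ J) ∇φ(p)` for the Rimon–Koditschek potential
`φ(q) = f₀(q)/(f₀(q)^k + β(q))^(1/k)`, at a time `t₀` where the trajectory lies on an
obstacle boundary (`β(p(t₀)) = 0`, `f₀(p(t₀)) > 0`), the function `β ∘ p` is
differentiable with derivative `(c/k) f₀(p(t₀))^(-k) ‖∇β(p(t₀))‖²`. -/
theorem deriv_beta_along_averaged_trajectory
    (f₀ β : EuclideanSpace ℝ (Fin 2) → ℝ)
    (hf₀ : Differentiable ℝ f₀) (hβ : Differentiable ℝ β)
    (k c γ : ℝ) (hk : 0 < k)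
    (p : ℝ → EuclideanSpace ℝ (Fin 2)) (t₀ : ℝ) (hp : DifferentiableAt ℝ p t₀)
    (hode : deriv p t₀ =
      -c • (gradient (fun q => f₀ q / (f₀ q ^ k + β q) ^ (1 / k)) (p t₀) +
        γ • Jmap (gradient (fun q => f₀ q / (f₀ q ^ k + β q) ^ (1 / k)) (p t₀))))
    (hβ0 : β (p t₀) = 0) (hfpos : 0 < f₀ (p t₀)) :
    DifferentiableAt ℝ (β ∘ p) t₀ ∧
      deriv (β ∘ p) t₀ = c / k * f₀ (p t₀) ^ (-k) * ‖gradient β (p t₀)‖ ^ 2 := by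
  have hgrad : gradient (fun q => f₀ q / (f₀ q ^ k + β q) ^ (1 / k)) (p t₀) = _ :=
    gradient_rimonKoditschek_of_eq_zero (hf₀ _) (hβ _) hk.ne' hβ0 hfpos
  have hchain : HasDerivAt (β ∘ p) (fderiv ℝ β (p t₀) (deriv p t₀)) t₀ :=
    (hβ _).hasFDerivAt.comp_hasDerivAt t₀ hp.hasDerivAt
  refine ⟨hchain.differentiableAt, ?_⟩
  rw [hchain.deriv, ← inner_gradient_left, hode, hgrad, Jmap_smul, smul_comm γ, ← smul_add,
    inner_smul_right, inner_smul_right, inner_add_right, inner_smul_right, inner_Jmap_self,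
    real_inner_self_eq_norm_sq]
  ring
end

section
/- Let f₀, β : EuclideanSpace ℝ (Fin 2) → ℝ be continuously differentiable with f₀(q) > 0 for all q, let k > 0, and let φ(q) = f₀(q)/(f₀(q)^k + β(q))^(1/k) be the Rimon–Koditschek potential. Let c > 0 and γ ∈ ℝ, and let p : ℝ → EuclideanSpace ℝ (Fin 2) be differentiable and satisfy, for all t ≥ 0, f₀(p(t))^k + β(p(t)) > 0 and p'(t) = −c·(I + γ·J)(∇φ(p(t))). Assume β(p(0)) > 0 and that ∇β(q) ≠ 0 for every q with β(q) = 0. Then β(p(t)) > 0 for all t ≥ 0; that is, the averaged extremum-seeking trajectory never reaches the obstacle region {q : β(q) ≤ 0}. -/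
/-!
Along the averaged dynamics the potential `φ` is non-increasing: its derivative along `p` is
`⟪∇φ, -c (∇φ + γ J ∇φ)⟫ = -c ‖∇φ‖²`, because the rotation `J` is skew, so `⟪v, J v⟫ = 0`.
Where `f₀ > 0` and the denominator is positive, `φ < 1` is equivalent to `β > 0`. Hence
`φ(p t) ≤ φ(p 0) < 1` gives `β(p t) > 0`.
-/

open Set
open scoped InnerProductSpace

theorem inner_self_Jmap (v : EuclideanSpace ℝ (Fin 2)) : ⟪v, Jmap v⟫_ℝ = 0 := by
  simp [Jmap, PiLp.inner_apply, Fin.sum_univ_two, mul_comm]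

noncomputable def rkPotential {E : Type*} (f₀ β : E → ℝ) (k : ℝ) (q : E) : ℝ :=
  f₀ q / (f₀ q ^ k + β q) ^ (1 / k)

section RimonKoditschek

variable {E : Type*} {f₀ β : E → ℝ} {k : ℝ} {q : E}

theorem rkPotential_lt_one_iff (hk : 0 < k) (hf₀ : 0 < f₀ q) (hden : 0 < f₀ q ^ k + β q) :
    rkPotential f₀ β k q < 1 ↔ 0 < β q := by
  have hroot : 0 < (f₀ q ^ k + β q) ^ (1 / k) := Real.rpow_pos_of_pos hden _
  have hroot_pow : ((f₀ q ^ k + β q) ^ (1 / k)) ^ k = f₀ q ^ k + β q := by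
    rw [← Real.rpow_mul hden.le, one_div_mul_cancel hk.ne', Real.rpow_one]
  rw [rkPotential, div_lt_one hroot, ← Real.rpow_lt_rpow_iff hf₀.le hroot.le hk, hroot_pow,
    lt_add_iff_pos_right]

theorem differentiableAt_rkPotential [NormedAddCommGroup E] [NormedSpace ℝ E]
    (hf₀ : DifferentiableAt ℝ f₀ q) (hβ : DifferentiableAt ℝ β q) (hpos : 0 < f₀ q)
    (hden : 0 < f₀ q ^ k + β q) :
    DifferentiableAt ℝ (rkPotential f₀ β k) q := by
  have hroot : (f₀ q ^ k + β q) ^ (1 / k) ≠ 0 := (Real.rpow_pos_of_pos hden _).ne'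
  unfold rkPotential
  fun_prop (disch := first | assumption | exact Or.inl hpos.ne' | exact Or.inl hden.ne')

end RimonKoditschek

section SkewGradientFlow

variable {E : Type*} [NormedAddCommGroup E] [InnerProductSpace ℝ E] [CompleteSpace E]
  {f : E → ℝ} {p : ℝ → E}

theorem DifferentiableAt.hasDerivAt_comp_inner_gradient {p' : E} {t : ℝ}
    (hf : DifferentiableAt ℝ f (p t)) (hp : HasDerivAt p p' t) :
    HasDerivAt (f ∘ p) ⟪gradient f (p t), p'⟫_ℝ t := by
  rw [inner_gradient_left]
  exact hf.hasFDerivAt.comp_hasDerivAt t hp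

theorem antitoneOn_comp_of_hasDerivAt_neg_smul_gradient_add_skew {A : E → E}
    (hA : ∀ v, ⟪v, A v⟫_ℝ = 0) {c γ : ℝ} (hc : 0 ≤ c) {s : Set ℝ} (hs : Convex ℝ s)
    (hf : ∀ t ∈ s, DifferentiableAt ℝ f (p t))
    (hp : ∀ t ∈ s, HasDerivAt p (-c • (gradient f (p t) + γ • A (gradient f (p t)))) t) :
    AntitoneOn (f ∘ p) s := by
  have hderiv : ∀ t ∈ s, HasDerivAt (f ∘ p) (-c * ‖gradient f (p t)‖ ^ 2) t := by
    intro t ht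
    convert (hf t ht).hasDerivAt_comp_inner_gradient (hp t ht) using 1
    rw [real_inner_smul_right, inner_add_right, real_inner_smul_right, hA,
      real_inner_self_eq_norm_sq, mul_zero, add_zero]
  refine antitoneOn_of_hasDerivWithinAt_nonpos hs
    (fun t ht => (hderiv t ht).continuousAt.continuousWithinAt)
    (fun t ht => (hderiv t (interior_subset ht)).hasDerivWithinAt) fun t _ => ?_
  exact mul_nonpos_of_nonpos_of_nonneg (neg_nonpos.2 hc) (sq_nonneg _)

end SkewGradientFlow

theorem averaged_trajectory_collision_free_general
    (f₀ β : EuclideanSpace ℝ (Fin 2) → ℝ)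
    (hf₀ : ContDiff ℝ 1 f₀) (hβ : ContDiff ℝ 1 β)
    (hfpos : ∀ q, 0 < f₀ q)
    (k c γ : ℝ) (hk : 0 < k) (hc : 0 < c)
    (p : ℝ → EuclideanSpace ℝ (Fin 2)) (hp : Differentiable ℝ p)
    (hden : ∀ t, 0 ≤ t → 0 < f₀ (p t) ^ k + β (p t))
    (hode : ∀ t, 0 ≤ t → deriv p t =
      -c • (gradient (fun q => f₀ q / (f₀ q ^ k + β q) ^ (1 / k)) (p t) +
        γ • Jmap (gradient (fun q => f₀ q / (f₀ q ^ k + β q) ^ (1 / k)) (p t))))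
    (h0 : 0 < β (p 0)) :
    ∀ t, 0 ≤ t → 0 < β (p t) := by
  intro t ht
  have hdescent : AntitoneOn (rkPotential f₀ β k ∘ p) (Ici 0) :=
    antitoneOn_comp_of_hasDerivAt_neg_smul_gradient_add_skew inner_self_Jmap hc.le
      (convex_Ici 0)
      (fun s hs => differentiableAt_rkPotential (hf₀.differentiable one_ne_zero _)
        (hβ.differentiable one_ne_zero _) (hfpos _) (hden s hs))
      (fun s hs => hode s hs ▸ (hp s).hasDerivAt)
  have hstart : rkPotential f₀ β k (p 0) < 1 :=
    (rkPotential_lt_one_iff hk (hfpos _) (hden 0 le_rfl)).2 h0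
  exact (rkPotential_lt_one_iff hk (hfpos _) (hden t ht)).1
    ((hdescent self_mem_Ici ht ht).trans_lt hstart)

/-- **collision avoidance for the averaged dynamics.** If `p` solves the
averaged extremum-seeking ODE `p' = -c (I + γ J) ∇φ(p)` for the Rimon–Koditschek
potential `φ(q) = f₀(q)/(f₀(q)^k + β(q))^(1/k)`, starts in the free space
(`β(p(0)) > 0`), and `∇β ≠ 0 ` on `{β = 0}`, then `β(p(t)) > 0` for all `t ≥ 0`:
the trajectory never reaches the obstacle region `{β ≤ 0}`. -/
theorem averaged_trajectory_collision_free
    (f₀ β : EuclideanSpace ℝ (Fin 2) → ℝ)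
    (hf₀ : ContDiff ℝ 1 f₀) (hβ : ContDiff ℝ 1 β)
    (hfpos : ∀ q, 0 < f₀ q)
    (k c γ : ℝ) (hk : 0 < k) (hc : 0 < c)
    (p : ℝ → EuclideanSpace ℝ (Fin 2)) (hp : Differentiable ℝ p)
    (hden : ∀ t, 0 ≤ t → 0 < f₀ (p t) ^ k + β (p t))
    (hode : ∀ t, 0 ≤ t → deriv p t =
      -c • (gradient (fun q => f₀ q / (f₀ q ^ k + β q) ^ (1 / k)) (p t) +
        γ • Jmap (gradient (fun q => f₀ q / (f₀ q ^ k + β q) ^ (1 / k)) (p t))))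
    (h0 : 0 < β (p 0))
    (hgradβ : ∀ q, β q = 0 → gradient β q ≠ 0) :
    ∀ t, 0 ≤ t → 0 < β (p t) :=
  averaged_trajectory_collision_free_general f₀ β hf₀ hβ hfpos k c γ hk hc p hp hden hode h0
end
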